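/- arXiv:2308.00984 — 3 statements merged into one kernel-verified Lean document; each statement's English description precedes it below -/
import Mathlib

section
/- Let (Ω,F,P) be a complete probability space, (E,B(E)) a measurable space arising from a topological space E, X : [0,∞) → Ω → E a stochastic process such that the map (ω,t) ↦ X_t(ω) is F ⊗ B([0,∞))/B(E)-measurable, and let each atomic proposition a ∈ AP be assigned a Borel set B_a ⊆ E. Then for every MTL formula φ, the set ⟦φ⟧ := {(ω,t) : X(ω),t ⊨ φ} belongs to F ⊗ B([0,∞)), and for every t ∈ [0,∞) the set ⟦φ⟧(t) := {ω : X(ω),t ⊨ φ} belongs to F. -/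
open MeasureTheory
open scoped NNReal ENNReal Topology

/-- Syntax of MTL formulas over atomic propositions `AP`:
`φ ::= a | ¬φ | φ₁ ∧ φ₂ | φ₁ U_I φ₂` where `I` is a subset of `[0,∞)`. -/
inductive MTL (AP : Type*) : Type _ where
  | atom : AP → MTL AP
  | not : MTL AP → MTL AP
  | and : MTL AP → MTL AP → MTL AP
  | untl : MTL AP → MTL AP → Set ℝ≥0 → MTL AP

/-- The requirement that all the index sets occurring in until operators are intervals. -/
def MTL.intervalsOK {AP : Type*} : MTL AP → Prop
  | MTL.atom _ => True
  | MTL.not φ => φ.intervalsOK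
  | MTL.and φ ψ => φ.intervalsOK ∧ ψ.intervalsOK
  | MTL.untl φ ψ I => I.OrdConnected ∧ φ.intervalsOK ∧ ψ.intervalsOK

/-- Continuous-time semantics of MTL along the path `t ↦ X_t(ω)`, where the atomic
proposition `a` is interpreted by the set `V a`. -/
def MTL.Sat {Ω E AP : Type*} (X : ℝ≥0 → Ω → E) (V : AP → Set E) :
    MTL AP → Ω → ℝ≥0 → Prop
  | MTL.atom a => fun ω t => X t ω ∈ V a
  | MTL.not φ => fun ω t => ¬ φ.Sat X V ω t
  | MTL.and φ ψ => fun ω t => φ.Sat X V ω t ∧ ψ.Sat X V ω t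
  | MTL.untl φ ψ I => fun ω t => ∃ s ∈ I, ψ.Sat X V ω (t + s) ∧
      ∀ s' : ℝ≥0, t ≤ s' → s' < t + s → φ.Sat X V ω s'

/-!
Atoms, negations and conjunctions are immediate; the work is in the until operator, whose
satisfaction set involves an existential quantifier over a continuum of witness times. Splitting
the witness interval at a point of a countable dense set, and `I` into its (at most two) endpoints
and its interior, reduces it to countably many sets of the form "the `ω`-section of a product-
measurable set `D` meets an open interval with measurable endpoints", which are controlled by the
début `ω ↦ inf {t | (ω, t) ∈ D}`.

The début is measurable because projections of product-measurable sets onto `Ω` are measurable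
for a complete measure. Every product-measurable set is obtained by the Suslin operation from
rectangles `A × K` with `K` compact (or all of `T`); by compactness, projection commutes with the
Suslin operation on such schemes; and the Suslin operation preserves measurability for a complete
s-finite measure (Marczewski).
-/

open Set

section Suslin

variable {α : Type*}

def seqPrefix (σ : ℕ → ℕ) (n : ℕ) : List ℕ := (List.range n).map σ

lemma seqPrefix_succ (σ : ℕ → ℕ) (n : ℕ) :
    seqPrefix σ (n + 1) = seqPrefix σ n ++ [σ n] := by
  simp [seqPrefix, List.range_succ]

lemma seqPrefix_succ' (σ : ℕ → ℕ) (n : ℕ) :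
    seqPrefix σ (n + 1) = σ 0 :: seqPrefix (fun i => σ (i + 1)) n := by
  simp [seqPrefix, List.range_succ_eq_map, Function.comp_def]

lemma take_seqPrefix (σ : ℕ → ℕ) {m n : ℕ} (h : m ≤ n) :
    (seqPrefix σ n).take m = seqPrefix σ m := by
  simp [seqPrefix, ← List.map_take, List.take_range, Nat.min_eq_left h]

lemma length_seqPrefix (σ : ℕ → ℕ) (n : ℕ) : (seqPrefix σ n).length = n := by
  simp [seqPrefix]

lemma getD_seqPrefix (σ : ℕ → ℕ) {i n : ℕ} (h : i < n) :
    (seqPrefix σ n).getD i 0 = σ i := by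
  simp [seqPrefix, h]

lemma seqPrefix_congr {σ τ : ℕ → ℕ} {n : ℕ} (h : ∀ i < n, σ i = τ i) :
    seqPrefix σ n = seqPrefix τ n :=
  List.map_congr_left fun i hi => h i (List.mem_range.1 hi)

def suslin (u : List ℕ → Set α) : Set α := ⋃ σ : ℕ → ℕ, ⋂ n, u (seqPrefix σ n)

def IsSuslin (C : Set (Set α)) (S : Set α) : Prop :=
  ∃ u : List ℕ → Set α, (∀ s, u s ∈ C) ∧ suslin u = S

variable {u v : List ℕ → Set α}

lemma suslin_mono (h : ∀ s, u s ⊆ v s) : suslin u ⊆ suslin v :=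
  iUnion_mono fun _ => iInter_mono fun _ => h _

lemma suslin_subset_nil : suslin u ⊆ u [] :=
  iUnion_subset fun _ => iInter_subset_of_subset 0 subset_rfl

lemma suslin_subset_iUnion_cons : suslin u ⊆ ⋃ k, suslin fun s => u (k :: s) := by
  refine iUnion_subset fun σ a ha =>
    mem_iUnion.2 ⟨σ 0, mem_iUnion.2 ⟨fun i => σ (i + 1), ?_⟩⟩
  exact mem_iInter.2 fun n => by simpa only [seqPrefix_succ'] using mem_iInter.1 ha (n + 1)

lemma suslin_eq_iUnion_cons (h : ⋃ k, suslin (fun s => u (k :: s)) ⊆ u []) :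
    suslin u = ⋃ k, suslin fun s => u (k :: s) := by
  refine suslin_subset_iUnion_cons.antisymm (iUnion_subset fun k a ha => ?_)
  obtain ⟨σ, hσ⟩ := mem_iUnion.1 ha
  refine mem_iUnion.2 ⟨fun n => n.casesOn k σ, mem_iInter.2 fun n => ?_⟩
  cases n with
  | zero => exact h (mem_iUnion.2 ⟨k, ha⟩)
  | succ n => rw [seqPrefix_succ']; exact mem_iInter.1 hσ n

lemma suslin_const (S : Set α) : suslin (fun _ => S) = S := by
  simp only [suslin, iInter_const, iUnion_const]

lemma mem_suslin_of_forall_exists_append {a : α} (h0 : a ∈ u [])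
    (h : ∀ s, a ∈ u s → ∃ k, a ∈ u (s ++ [k])) : a ∈ suslin u := by
  have : ∀ s, ∃ k, a ∈ u s → a ∈ u (s ++ [k]) := fun s => by
    by_cases hs : a ∈ u s
    · exact (h s hs).imp fun _ hk _ => hk
    · exact ⟨0, fun h => absurd h hs⟩
  choose next hnext using this
  let path : ℕ → List ℕ := fun n => Nat.rec [] (fun _ s => s ++ [next s]) n
  have hpath : ∀ n, path n = seqPrefix (fun i => next (path i)) n := by
    intro n
    induction n with
    | zero => rfl
    | succ n ih => rw [seqPrefix_succ, ← ih]
  have hmem : ∀ n, a ∈ u (path n) := by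
    intro n
    induction n with
    | zero => exact h0
    | succ n ih => exact hnext _ ih
  exact mem_iUnion.2 ⟨_, mem_iInter.2 fun n => hpath n ▸ hmem n⟩

theorem nullMeasurableSet_suslin [MeasurableSpace α] (μ : Measure α) [SFinite μ]
    (hu : ∀ s, MeasurableSet (u s)) : NullMeasurableSet (suslin u) μ := by
  -- `hull s` is a measurable cover of the part of `suslin u` below the node `s`; off the null
  -- set `N`, a point of `hull []` can be followed down an infinite branch of hulls.
  set tail : List ℕ → Set α := fun s => suslin fun t => u (s ++ t)
  set hull : List ℕ → Set α := fun s => toMeasurable μ (tail s) ∩ u s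
  have hhull : ∀ s, MeasurableSet (hull s) := fun s =>
    (measurableSet_toMeasurable _ _).inter (hu s)
  have tail_subset_hull : ∀ s, tail s ⊆ hull s := fun s =>
    subset_inter (subset_toMeasurable _ _)
      (by simpa only [List.append_nil] using suslin_subset_nil (u := fun t => u (s ++ t)))
  set N := ⋃ s, hull s \ ⋃ k, hull (s ++ [k])
  have hN : μ N = 0 := by
    refine measure_iUnion_null fun s => ?_
    have htail : tail s ⊆ ⋃ k, hull (s ++ [k]) := by
      refine (suslin_subset_iUnion_cons).trans (iUnion_mono fun k => ?_)
      simpa only [tail, List.append_assoc, List.singleton_append] using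
        tail_subset_hull (s ++ [k])
    refine measure_mono_null (sdiff_subset_sdiff_left inter_subset_left) ?_
    rw [Set.sdiff_eq, Measure.measure_toMeasurable_inter_of_sFinite
      (MeasurableSet.iUnion fun k => hhull _).compl]
    exact measure_mono_null (fun a ha => ha.2 (htail ha.1)) measure_empty
  have hsub : suslin u ⊆ hull [] := by
    simpa only [tail, List.nil_append] using tail_subset_hull []
  have hdiff : hull [] \ suslin u ⊆ N := by
    rintro a ⟨ha, hna⟩
    by_contra haN
    refine hna (suslin_mono (fun s => inter_subset_right)
      (mem_suslin_of_forall_exists_append (u := hull) ha fun s hs => ?_))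
    by_contra hk
    exact haN (mem_iUnion.2 ⟨s, hs, fun hmem => hk (mem_iUnion.1 hmem)⟩)
  refine (hhull []).nullMeasurableSet.congr (ae_eq_set.2 ⟨measure_mono_null hdiff hN, ?_⟩)
  rw [sdiff_eq_empty.2 hsub, measure_empty]

lemma iInter_suslin_eq (u : ℕ → List ℕ → Set α) :
    ⋂ k, suslin (u k) = suslin fun s => u s.length.unpair.1
      (seqPrefix (fun i => s.getD (Nat.pair s.length.unpair.1 i) 0) s.length.unpair.2) := by
  set w : List ℕ → Set α := fun s => u s.length.unpair.1
    (seqPrefix (fun i => s.getD (Nat.pair s.length.unpair.1 i) 0) s.length.unpair.2)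
  -- a branch through `w` interleaves, via `Nat.pair`, one branch through each `u k`
  have hw : ∀ σ k m,
      w (seqPrefix σ (Nat.pair k m)) = u k (seqPrefix (fun i => σ (Nat.pair k i)) m) := by
    intro σ k m
    simp only [w, length_seqPrefix, Nat.unpair_pair]
    exact congrArg (u k) (seqPrefix_congr fun i hi =>
      getD_seqPrefix σ (Nat.pair_lt_pair_right k hi))
  ext a
  simp only [suslin, mem_iInter, mem_iUnion]
  constructor
  · intro ha
    choose τ hτ using ha
    refine ⟨fun j => τ j.unpair.1 j.unpair.2, fun j => ?_⟩
    obtain ⟨k, m, rfl⟩ : ∃ k m, j = Nat.pair k m := ⟨_, _, (Nat.pair_unpair j).symm⟩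
    simpa only [hw, Nat.unpair_pair] using hτ k m
  · rintro ⟨σ, hσ⟩ k
    exact ⟨fun i => σ (Nat.pair k i), fun m => hw σ k m ▸ hσ (Nat.pair k m)⟩

variable {C : Set (Set α)}

lemma IsSuslin.of_mem {S : Set α} (hS : S ∈ C) : IsSuslin C S :=
  ⟨fun _ => S, fun _ => hS, suslin_const S⟩

lemma IsSuslin.iInter {S : ℕ → Set α} (hS : ∀ n, IsSuslin C (S n)) :
    IsSuslin C (⋂ n, S n) := by
  choose u hu hS using hS
  rw [← iInter_congr hS, iInter_suslin_eq]
  exact ⟨_, fun s => hu _ _, rfl⟩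

lemma IsSuslin.iUnion {ι : Type*} [Countable ι] [Nonempty ι] (huniv : univ ∈ C)
    {S : ι → Set α} (hS : ∀ i, IsSuslin C (S i)) : IsSuslin C (⋃ i, S i) := by
  obtain ⟨f, hf⟩ := exists_surjective_nat ι
  choose u hu hS using hS
  let w : List ℕ → Set α := fun s => match s with
    | [] => univ
    | k :: s => u (f k) s
  refine ⟨w, fun s => ?_, ?_⟩
  · cases s with
    | nil => exact huniv
    | cons k s => exact hu _ _
  · rw [suslin_eq_iUnion_cons (subset_univ _), ← hf.iUnion_comp]
    exact iUnion_congr fun k => hS (f k)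

lemma IsSuslin.union (huniv : univ ∈ C) {S T : Set α} (hS : IsSuslin C S) (hT : IsSuslin C T) :
    IsSuslin C (S ∪ T) := by
  rw [union_eq_iUnion]
  exact .iUnion huniv fun b => by cases b <;> assumption

theorem IsSuslin.of_measurableSet_generateFrom (hempty : ∅ ∈ C) (huniv : univ ∈ C)
    {G : Set (Set α)} (hG : ∀ g ∈ G, IsSuslin C g ∧ IsSuslin C gᶜ) {S : Set α}
    (hS : MeasurableSet[.generateFrom G] S) : IsSuslin C S := by
  refine (MeasurableSpace.generateFrom_induction G (fun S _ => IsSuslin C S ∧ IsSuslin C Sᶜ)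
    (fun g hg _ => hG g hg) ?_ (fun _ _ h => ?_) (fun _ _ h => ?_) S hS).1
  · exact ⟨.of_mem hempty, by rw [compl_empty]; exact .of_mem huniv⟩
  · exact ⟨h.2, by rw [compl_compl]; exact h.1⟩
  · refine ⟨.iUnion huniv fun n => (h n).1, ?_⟩
    rw [compl_iUnion]
    exact .iInter fun n => (h n).2

end Suslin

section Projection

variable {Ω T : Type*}

lemma measurableSet_image_fst_iInter_prod [MeasurableSpace Ω] {ι : Type*} [Countable ι]
    {A : ι → Set Ω} (hA : ∀ i, MeasurableSet (A i)) (K : ι → Set T) :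
    MeasurableSet (Prod.fst '' ⋂ i, A i ×ˢ K i) := by
  have : Prod.fst '' ⋂ i, A i ×ˢ K i = (⋂ i, A i) ∩ {_ω | (⋂ i, K i).Nonempty} := by
    ext ω
    simp [Set.Nonempty, forall_and]
  rw [this]
  exact (MeasurableSet.iInter hA).inter (.const _)

variable [TopologicalSpace T]

lemma IsOpen.isSigmaCompact [LocallyCompactSpace T] [SecondCountableTopology T] {U : Set T}
    (hU : IsOpen U) : IsSigmaCompact U :=
  have := hU.locallyCompactSpace
  isSigmaCompact_iff_sigmaCompactSpace.2 inferInstance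

lemma IsClosed.isSigmaCompact [SigmaCompactSpace T] {F : Set T} (hF : IsClosed F) :
    IsSigmaCompact F :=
  ⟨fun n => F ∩ compactCovering T n, fun n => (isCompact_compactCovering T n).inter_left hF,
    by rw [← inter_iUnion, iUnion_compactCovering, inter_univ]⟩

lemma nonempty_iInter_of_isCompact_or_eq_univ [T2Space T] {K : ℕ → Set T}
    (hK : ∀ n, IsCompact (K n) ∨ K n = univ) (h : ∀ n, ∃ t, ∀ m ≤ n, t ∈ K m) :
    (⋂ n, K n).Nonempty := by
  have hclosed : ∀ n, IsClosed (K n) := fun n =>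
    (hK n).elim IsCompact.isClosed fun h => h ▸ isClosed_univ
  by_cases hc : ∃ n₀, IsCompact (K n₀)
  · obtain ⟨n₀, hn₀⟩ := hc
    refine (hn₀.inter_iInter_nonempty K hclosed fun F => ?_).mono inter_subset_right
    obtain ⟨t, ht⟩ := h (max n₀ (F.sup id))
    exact ⟨t, ht n₀ (le_max_left _ _), mem_iInter₂.2 fun i hi =>
      ht i ((Finset.le_sup (f := id) hi).trans (le_max_right _ _))⟩
  · simp only [not_exists] at hc
    obtain ⟨t, -⟩ := h 0
    exact ⟨t, mem_iInter.2 fun n => ((hK n).resolve_left (hc n)).symm ▸ mem_univ t⟩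

lemma image_fst_suslin_prod [T2Space T] {A : List ℕ → Set Ω} {K : List ℕ → Set T}
    (hK : ∀ s, IsCompact (K s) ∨ K s = univ) :
    Prod.fst '' suslin (fun s => A s ×ˢ K s) =
      suslin fun s => Prod.fst '' ⋂ m : Fin (s.length + 1), A (s.take m) ×ˢ K (s.take m) := by
  have take_eq : ∀ σ n (m : Fin ((seqPrefix σ n).length + 1)),
      (seqPrefix σ n).take m = seqPrefix σ m := fun σ n m =>
    take_seqPrefix σ (by have := length_seqPrefix σ n; omega)
  ext ω
  constructor
  · rintro ⟨⟨ω, t⟩, hmem, rfl⟩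
    obtain ⟨σ, hσ⟩ := mem_iUnion.1 hmem
    refine mem_iUnion.2 ⟨σ, mem_iInter.2 fun n => ⟨(ω, t), mem_iInter.2 fun m => ?_, rfl⟩⟩
    rw [take_eq]
    exact mem_iInter.1 hσ m
  · intro hω
    obtain ⟨σ, hσ⟩ := mem_iUnion.1 hω
    set L : ℕ → Set T := fun n => Prod.mk ω ⁻¹' (A (seqPrefix σ n) ×ˢ K (seqPrefix σ n))
    have hL : ∀ n, IsCompact (L n) ∨ L n = univ := fun n => by
      by_cases hωA : ω ∈ A (seqPrefix σ n)
      · simpa only [L, mk_preimage_prod_right hωA] using hK _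
      · simp only [L, mk_preimage_prod_right_eq_empty hωA, isCompact_empty, true_or]
    obtain ⟨t, ht⟩ := nonempty_iInter_of_isCompact_or_eq_univ hL fun n => by
      obtain ⟨⟨ω', t⟩, hmem, rfl⟩ := mem_iInter.1 hσ n
      refine ⟨t, fun m hm => ?_⟩
      simpa only [L, mem_preimage, take_seqPrefix σ hm] using
        mem_iInter.1 hmem ⟨m, Nat.lt_succ_of_le (by rwa [length_seqPrefix])⟩
    exact ⟨(ω, t), mem_iUnion.2 ⟨σ, mem_iInter.2 fun n => mem_iInter.1 ht n⟩, rfl⟩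

variable [MeasurableSpace Ω]

variable (Ω T) in
def compactRectangles : Set (Set (Ω × T)) :=
  image2 (· ×ˢ ·) {A | MeasurableSet A} {K | IsCompact K ∨ K = univ}

lemma empty_mem_compactRectangles : (∅ : Set (Ω × T)) ∈ compactRectangles Ω T :=
  ⟨∅, .empty, ∅, Or.inl isCompact_empty, empty_prod⟩

lemma univ_mem_compactRectangles : (univ : Set (Ω × T)) ∈ compactRectangles Ω T :=
  ⟨univ, .univ, univ, Or.inr rfl, univ_prod_univ⟩

lemma IsSuslin.prod_of_isSigmaCompact {A : Set Ω} (hA : MeasurableSet A) {K : Set T}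
    (hK : IsSigmaCompact K) : IsSuslin (compactRectangles Ω T) (A ×ˢ K) := by
  obtain ⟨L, hL, rfl⟩ := hK
  rw [prod_iUnion]
  exact .iUnion univ_mem_compactRectangles fun n => .of_mem ⟨A, hA, L n, Or.inl (hL n), rfl⟩

variable [LocallyCompactSpace T] [SecondCountableTopology T] [MeasurableSpace T] [BorelSpace T]

theorem IsSuslin.of_measurableSet {S : Set (Ω × T)} (hS : MeasurableSet S) :
    IsSuslin (compactRectangles Ω T) S := by
  rw [← generateFrom_eq_prod MeasurableSpace.generateFrom_measurableSet
    BorelSpace.measurable_eq.symm isCountablySpanning_measurableSet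
    ⟨fun _ => univ, fun _ => isOpen_univ, iUnion_const _⟩] at hS
  refine .of_measurableSet_generateFrom empty_mem_compactRectangles univ_mem_compactRectangles
    ?_ hS
  rintro _ ⟨A, hA, U, hU, rfl⟩
  refine ⟨.prod_of_isSigmaCompact hA hU.isSigmaCompact, ?_⟩
  rw [compl_prod_eq_union]
  exact .union univ_mem_compactRectangles (.of_mem ⟨Aᶜ, hA.compl, univ, Or.inr rfl, rfl⟩)
    (.prod_of_isSigmaCompact .univ hU.isClosed_compl.isSigmaCompact)

theorem MeasurableSet.nullMeasurableSet_image_fst [T2Space T] {S : Set (Ω × T)}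
    (hS : MeasurableSet S) (μ : Measure Ω) [SFinite μ] :
    NullMeasurableSet (Prod.fst '' S) μ := by
  obtain ⟨u, hu, rfl⟩ := IsSuslin.of_measurableSet hS
  choose A hA K hK hAK using hu
  obtain rfl : u = fun s => A s ×ˢ K s := funext fun s => (hAK s).symm
  rw [image_fst_suslin_prod hK]
  exact nullMeasurableSet_suslin μ fun s => measurableSet_image_fst_iInter_prod (fun _ => hA _) _

end Projection

section Debut

variable {Ω β : Type*}

noncomputable def debut (D : Set (Ω × ℝ≥0)) (ω : Ω) : ℝ≥0∞ :=
  ⨅ (t : ℝ≥0) (_ : (ω, t) ∈ D), (t : ℝ≥0∞)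

lemma debut_lt_iff {D : Set (Ω × ℝ≥0)} {ω : Ω} {c : ℝ≥0∞} :
    debut D ω < c ↔ ∃ t : ℝ≥0, (ω, t) ∈ D ∧ (t : ℝ≥0∞) < c := by
  simp only [debut, iInf_lt_iff, exists_prop]

variable [MeasurableSpace Ω]

theorem measurable_debut (μ : Measure Ω) [SFinite μ] [μ.IsComplete] {D : Set (Ω × ℝ≥0)}
    (hD : MeasurableSet D) : Measurable (debut D) := by
  refine measurable_of_Iio fun c => ?_
  have : debut D ⁻¹' Iio c = Prod.fst '' (D ∩ {p | (p.2 : ℝ≥0∞) < c}) := by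
    ext ω
    simp [debut_lt_iff]
  rw [this]
  exact ((hD.inter (measurableSet_lt (by fun_prop) measurable_const)).nullMeasurableSet_image_fst
    μ).measurable_of_complete

variable [MeasurableSpace β]

lemma measurableSet_exists_mem_Ioo (μ : Measure Ω) [SFinite μ] [μ.IsComplete] {h : β → Ω}
    (hh : Measurable h) {D : Set (Ω × ℝ≥0)} (hD : MeasurableSet D) {f : β → ℝ≥0}
    (hf : Measurable f) {g : β → ℝ≥0∞} (hg : Measurable g) :
    MeasurableSet {b | ∃ v : ℝ≥0, (h b, v) ∈ D ∧ f b < v ∧ (v : ℝ≥0∞) < g b} := by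
  obtain ⟨Q, hQc, hQd⟩ := TopologicalSpace.exists_countable_dense ℝ≥0
  have : {b | ∃ v : ℝ≥0, (h b, v) ∈ D ∧ f b < v ∧ (v : ℝ≥0∞) < g b} =
      ⋃ q ∈ Q, {b | f b < q} ∩ {b | debut (D ∩ {p | q ≤ p.2}) (h b) < g b} := by
    ext b
    simp only [mem_ofPred_eq, mem_iUnion, mem_inter_iff, debut_lt_iff, exists_prop]
    constructor
    · rintro ⟨v, hv, hfv, hvg⟩
      obtain ⟨q, hq, hfq, hqv⟩ := hQd.exists_between hfv
      exact ⟨q, hq, hfq, v, ⟨hv, hqv.le⟩, hvg⟩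
    · rintro ⟨q, -, hfq, v, ⟨hv, hqv⟩, hvg⟩
      exact ⟨v, hv, hfq.trans_le hqv, hvg⟩
  rw [this]
  exact .biUnion hQc fun q _ => (measurableSet_lt hf measurable_const).inter
    (measurableSet_lt ((measurable_debut μ
      (hD.inter (measurableSet_le measurable_const measurable_snd))).comp hh) hg)

lemma measurableSet_forall_mem_Ico (μ : Measure Ω) [SFinite μ] [μ.IsComplete] {h : β → Ω}
    (hh : Measurable h) {Φ : Set (Ω × ℝ≥0)} (hΦ : MeasurableSet Φ) {f g : β → ℝ≥0}
    (hf : Measurable f) (hg : Measurable g) :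
    MeasurableSet {b | ∀ v, f b ≤ v → v < g b → (h b, v) ∈ Φ} := by
  have : {b | ∀ v, f b ≤ v → v < g b → (h b, v) ∈ Φ} =
      ({b | (h b, f b) ∈ Φᶜ} ∩ {b | f b < g b} ∪
        {b | ∃ v : ℝ≥0, (h b, v) ∈ Φᶜ ∧ f b < v ∧ (v : ℝ≥0∞) < g b})ᶜ := by
    ext b
    simp only [mem_ofPred_eq, mem_compl_iff, mem_union, mem_inter_iff, ENNReal.coe_lt_coe]
    constructor
    · rintro H (⟨hbad, hlt⟩ | ⟨v, hbad, hfv, hvg⟩)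
      · exact hbad (H _ le_rfl hlt)
      · exact hbad (H v hfv.le hvg)
    · intro H v hfv hvg
      by_contra hbad
      rcases hfv.eq_or_lt with rfl | hfv
      · exact H (Or.inl ⟨hbad, hvg⟩)
      · exact H (Or.inr ⟨v, hbad, hfv, hvg⟩)
  rw [this]
  exact ((((hh.prodMk hf) hΦ.compl).inter (measurableSet_lt hf hg)).union
    (measurableSet_exists_mem_Ioo μ hh hΦ.compl hf (by fun_prop))).compl

lemma Set.OrdConnected.mem_of_sInf_lt_of_lt_iSup {I : Set ℝ≥0} (hI : I.OrdConnected)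
    {s : ℝ≥0} (ha : sInf I < s) (hb : (s : ℝ≥0∞) < ⨆ x ∈ I, (x : ℝ≥0∞)) :
    s ∈ I := by
  obtain ⟨s₂, hs₂, hss₂⟩ : ∃ s₂ ∈ I, s < s₂ := by
    simpa only [lt_iSup_iff, ENNReal.coe_lt_coe, exists_prop] using hb
  obtain ⟨s₁, hs₁, hs₁s⟩ := (csInf_lt_iff (OrderBot.bddBelow I) ⟨s₂, hs₂⟩).1 ha
  exact hI.out hs₁ hs₂ ⟨hs₁s.le, hss₂.le⟩

lemma measurableSet_exists_add_mem (μ : Measure Ω) [SFinite μ] [μ.IsComplete]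
    {A : Set (Ω × ℝ≥0)} (hA : MeasurableSet A) {I : Set ℝ≥0} (hI : I.OrdConnected) :
    MeasurableSet {p : Ω × ℝ≥0 | ∃ s ∈ I, (p.1, p.2 + s) ∈ A} := by
  set a := sInf I
  set b : ℝ≥0∞ := ⨆ s ∈ I, (s : ℝ≥0∞)
  -- at most the two endpoints of `I`; the rest of `I` is the open interval between them
  set E := {s ∈ I | ¬(a < s ∧ (s : ℝ≥0∞) < b)}
  have hE : E.Countable := by
    have hb : {s : ℝ≥0 | (s : ℝ≥0∞) = b}.Subsingleton := fun x hx y hy =>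
      ENNReal.coe_injective (hx.trans hy.symm)
    refine ((countable_singleton a).union hb.countable).mono ?_
    rintro s ⟨hs, hsE⟩
    rcases (csInf_le (OrderBot.bddBelow I) hs).eq_or_lt with has | has
    · exact Or.inl has.symm
    · exact Or.inr ((le_biSup _ hs).eq_of_not_lt fun hsb => hsE ⟨has, hsb⟩)
  have : {p : Ω × ℝ≥0 | ∃ s ∈ I, (p.1, p.2 + s) ∈ A} =
      (⋃ s ∈ E, (fun p : Ω × ℝ≥0 => (p.1, p.2 + s)) ⁻¹' A) ∪
        {p | ∃ v : ℝ≥0, (p.1, v) ∈ A ∧ p.2 + a < v ∧ (v : ℝ≥0∞) < p.2 + b} := by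
    ext ⟨ω, t⟩
    simp only [mem_ofPred_eq, mem_union, mem_iUnion, mem_preimage, exists_prop]
    constructor
    · rintro ⟨s, hs, hsA⟩
      by_cases hsE : a < s ∧ (s : ℝ≥0∞) < b
      · refine Or.inr ⟨t + s, hsA, add_lt_add_right hsE.1 t, ?_⟩
        rw [ENNReal.coe_add]
        exact ENNReal.add_lt_add_left ENNReal.coe_ne_top hsE.2
      · exact Or.inl ⟨s, ⟨hs, hsE⟩, hsA⟩
    · rintro (⟨s, ⟨hs, -⟩, hsA⟩ | ⟨v, hvA, hav, hvb⟩)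
      · exact ⟨s, hs, hsA⟩
      · have htv : t + (v - t) = v := add_tsub_cancel_of_le (le_self_add.trans hav.le)
        refine ⟨v - t, hI.mem_of_sInf_lt_of_lt_iSup (lt_tsub_iff_left.2 hav) ?_, by rwa [htv]⟩
        by_contra! hbv
        have : (t : ℝ≥0∞) + b ≤ v := calc
          (t : ℝ≥0∞) + b ≤ t + ↑(v - t) := by gcongr
          _ = v := by rw [← ENNReal.coe_add, htv]
        exact this.not_gt hvb
  rw [this]
  exact (MeasurableSet.biUnion hE fun s _ =>
    (measurable_fst.prodMk (measurable_snd.add_const s)) hA).union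
    (measurableSet_exists_mem_Ioo μ measurable_fst hA (by fun_prop) (by fun_prop))

theorem measurableSet_until (μ : Measure Ω) [SFinite μ] [μ.IsComplete]
    {Φ Ψ : Set (Ω × ℝ≥0)} (hΦ : MeasurableSet Φ) (hΨ : MeasurableSet Ψ) {I : Set ℝ≥0}
    (hI : I.OrdConnected) :
    MeasurableSet {p : Ω × ℝ≥0 | ∃ s ∈ I, (p.1, p.2 + s) ∈ Ψ ∧
      ∀ s' : ℝ≥0, p.2 ≤ s' → s' < p.2 + s → (p.1, s') ∈ Φ} := by
  obtain ⟨Q, hQc, hQd⟩ := TopologicalSpace.exists_countable_dense ℝ≥0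
  -- either `s = 0`, or `[t, t + s)` splits at some `q ∈ Q` into `[t, q)` and `[q, t + s)`
  have : {p : Ω × ℝ≥0 | ∃ s ∈ I, (p.1, p.2 + s) ∈ Ψ ∧
      ∀ s' : ℝ≥0, p.2 ≤ s' → s' < p.2 + s → (p.1, s') ∈ Φ} =
      {_p | 0 ∈ I} ∩ Ψ ∪ ⋃ q ∈ Q,
        ({p | p.2 < q} ∩ {p | ∀ s', p.2 ≤ s' → s' < q → (p.1, s') ∈ Φ}) ∩
        {p | ∃ s ∈ I, (p.1, p.2 + s) ∈
          {p | q < p.2} ∩ Ψ ∩ {p | ∀ s', q ≤ s' → s' < p.2 → (p.1, s') ∈ Φ}} := by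
    ext ⟨ω, t⟩
    simp only [mem_ofPred_eq, mem_union, mem_inter_iff, mem_iUnion, exists_prop]
    constructor
    · rintro ⟨s, hs, hsΨ, hsΦ⟩
      rcases eq_zero_or_pos s with rfl | hs0
      · exact Or.inl ⟨hs, by simpa using hsΨ⟩
      · obtain ⟨q, hq, htq, hqs⟩ := hQd.exists_between (lt_add_of_pos_right t hs0)
        exact Or.inr ⟨q, hq, ⟨htq, fun s' h₁ h₂ => hsΦ s' h₁ (h₂.trans hqs)⟩,
          s, hs, ⟨hqs, hsΨ⟩, fun s' h₁ h₂ => hsΦ s' (htq.le.trans h₁) h₂⟩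
    · rintro (⟨h0, hΨt⟩ | ⟨q, -, ⟨htq, hbefore⟩, s, hs, ⟨-, hsΨ⟩, hafter⟩)
      · exact ⟨0, h0, by simpa using hΨt, fun s' h₁ h₂ =>
          absurd h₁ (by simpa using h₂)⟩
      · exact ⟨s, hs, hsΨ, fun s' h₁ h₂ =>
          (lt_or_ge s' q).elim (hbefore s' h₁) fun h => hafter s' h h₂⟩
  rw [this]
  refine ((MeasurableSet.const _).inter hΨ).union (.biUnion hQc fun q _ => ?_)
  refine ((measurableSet_lt measurable_snd measurable_const).inter
    (measurableSet_forall_mem_Ico μ measurable_fst hΦ measurable_snd measurable_const)).inter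
    (measurableSet_exists_add_mem μ ?_ hI)
  exact ((measurableSet_lt measurable_const measurable_snd).inter hΨ).inter
    (measurableSet_forall_mem_Ico μ measurable_fst hΦ measurable_const measurable_snd)

end Debut

theorem MTL.measurableSet_setOf_sat {Ω E AP : Type*} [MeasurableSpace Ω] [MeasurableSpace E]
    (μ : Measure Ω) [SFinite μ] [μ.IsComplete] {X : ℝ≥0 → Ω → E}
    (hX : Measurable fun p : Ω × ℝ≥0 => X p.2 p.1) {V : AP → Set E}
    (hV : ∀ a, MeasurableSet (V a)) {φ : MTL AP} (hφ : φ.intervalsOK) :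
    MeasurableSet {p : Ω × ℝ≥0 | φ.Sat X V p.1 p.2} := by
  induction φ with
  | atom a => exact hX (hV a)
  | not φ ih => exact (ih hφ).compl
  | and φ ψ ihφ ihψ => exact (ihφ hφ.1).inter (ihψ hφ.2)
  | untl φ ψ I ihφ ihψ => exact measurableSet_until μ (ihφ hφ.2.1) (ihψ hφ.2.2) hφ.1

theorem stmt_4_general {Ω E AP : Type*} [MeasurableSpace Ω] [MeasurableSpace E]
    (P : Measure Ω) [IsProbabilityMeasure P] [P.IsComplete]
    (X : ℝ≥0 → Ω → E) (hX : Measurable fun p : Ω × ℝ≥0 => X p.2 p.1)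
    (V : AP → Set E) (hV : ∀ a, MeasurableSet (V a))
    (φ : MTL AP) (hφ : φ.intervalsOK) :
    MeasurableSet {p : Ω × ℝ≥0 | φ.Sat X V p.1 p.2} ∧
      ∀ t : ℝ≥0, MeasurableSet {ω | φ.Sat X V ω t} :=
  have hsat := MTL.measurableSet_setOf_sat P hX hV hφ
  ⟨hsat, fun _ => measurable_prodMk_right hsat⟩

/-- on a complete probability space, if `(ω,t) ↦ X_t(ω)` is jointly measurable
(with `E` a topological space with its Borel σ-algebra) and each atomic proposition is
interpreted by a Borel set, then for every MTL formula `φ`, the satisfaction set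
`⟦φ⟧ = {(ω,t) : X(ω),t ⊨ φ}` is product-measurable, and each section
`⟦φ⟧(t) = {ω : X(ω),t ⊨ φ}` is `F`-measurable. -/
theorem stmt_4 {Ω E AP : Type*} [MeasurableSpace Ω] [TopologicalSpace E] [MeasurableSpace E]
    [BorelSpace E] [Finite AP] (P : Measure Ω) [IsProbabilityMeasure P] [P.IsComplete]
    (X : ℝ≥0 → Ω → E) (hX : Measurable fun p : Ω × ℝ≥0 => X p.2 p.1)
    (V : AP → Set E) (hV : ∀ a, MeasurableSet (V a))
    (φ : MTL AP) (hφ : φ.intervalsOK) :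
    MeasurableSet {p : Ω × ℝ≥0 | φ.Sat X V p.1 p.2} ∧
      ∀ t : ℝ≥0, MeasurableSet {ω | φ.Sat X V ω t} :=
  stmt_4_general P X hX V hV φ hφ
end

section
/- Let n ≥ 2 be a natural number and let f : [0,∞) → ℝ be any function. Then f,0 ⊭ₙ ψ, i.e., the discrete semantics of ψ fails at time 0 for every path. -/
/-!
Measure time in units of `1/n`. If `φ₁` holds at `M`, its box over `v ∈ (n, 2n)` forbids `p` on
`M + [2n+2, 5n-2]` and, at `v = n + 1`, forces `p` at `M + 5n - 1` or `M + 5n`. Hence `φ₁` also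
holds at `M - 1` (in the first case) or at `M + 1` (in the second), unless `p` holds at
`M + 2n + 1`. But `φ₂` at `i` pins its `φ₁`-witness to the single grid point `i + 2n`, and
`¬◇_{(0,8)}p` excludes `p` at `i + 4n + 1 < 8n`.
-/

open scoped NNReal ENNReal Topology

/-- The grid `ℕ/n = {k/n : k ∈ ℕ}` inside `[0,∞)`. -/
def grid (n : ℕ) : Set ℝ≥0 := {t | ∃ k : ℕ, t = (k : ℝ≥0) / (n : ℝ≥0)}

/-- Discrete `◇_I φ` at time `t`: there is `s ∈ I ∩ ℕ/n` with `φ` at `t+s`. -/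
def DiaD (n : ℕ) (I : Set ℝ≥0) (φ : ℝ≥0 → Prop) (t : ℝ≥0) : Prop := ∃ s ∈ I ∩ grid n, φ (t + s)

/-- Discrete `□_I φ` at time `t`: for all `s ∈ I ∩ ℕ/n`, `φ` at `t+s`. -/
def BoxD (n : ℕ) (I : Set ℝ≥0) (φ : ℝ≥0 → Prop) (t : ℝ≥0) : Prop := ∀ s ∈ I ∩ grid n, φ (t + s)

/-- The atomic proposition `p`: `f(t) ≥ 1`. -/
def SatP (f : ℝ≥0 → ℝ) (t : ℝ≥0) : Prop := 1 ≤ f t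

/-- Discrete semantics of `φ₁ := □_{(1,2)}(◇_{(1,4)}p ∧ ¬◇_{(1,3)}p)`. -/
def Phi1D (f : ℝ≥0 → ℝ) (n : ℕ) : ℝ≥0 → Prop :=
  BoxD n (Set.Ioo 1 2) fun u =>
    DiaD n (Set.Ioo 1 4) (SatP f) u ∧ ¬ DiaD n (Set.Ioo 1 3) (SatP f) u

/-- Discrete semantics of `φ₂ := (◇_{(1,3)}φ₁) ∧ (¬◇_{(1,2)}φ₁) ∧ (¬◇_{(2,3)}φ₁)`. -/
def Phi2D (f : ℝ≥0 → ℝ) (n : ℕ) : ℝ≥0 → Prop := fun t =>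
  DiaD n (Set.Ioo 1 3) (Phi1D f n) t ∧ ¬ DiaD n (Set.Ioo 1 2) (Phi1D f n) t ∧
    ¬ DiaD n (Set.Ioo 2 3) (Phi1D f n) t

/-- Discrete semantics of `φ₃ := ◇_{(1,2)}φ₂`. -/
def Phi3D (f : ℝ≥0 → ℝ) (n : ℕ) : ℝ≥0 → Prop := DiaD n (Set.Ioo 1 2) (Phi2D f n)

/-- Discrete semantics of `ψ := (¬p) ∧ (¬◇_{(0,8)}p) ∧ φ₃`. -/
def PsiD (f : ℝ≥0 → ℝ) (n : ℕ) : ℝ≥0 → Prop := fun t =>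
  ¬ SatP f t ∧ ¬ DiaD n (Set.Ioo 0 8) (SatP f) t ∧ Phi3D f n t

open Set

section GridTranslation

variable {n : ℕ}

lemma natCast_div_mem_Ioo_iff (hn : 0 < n) (a b k : ℕ) :
    (k : ℝ≥0) / n ∈ Ioo (a : ℝ≥0) b ↔ a * n < k ∧ k < b * n := by
  have hn' : (0 : ℝ≥0) < n := by exact_mod_cast hn
  rw [mem_Ioo, lt_div_iff₀ hn', div_lt_iff₀ hn']
  norm_cast

lemma natCast_div_add_natCast_div (k l : ℕ) :
    (k : ℝ≥0) / n + l / n = ((k + l : ℕ) : ℝ≥0) / n := by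
  rw [← add_div, Nat.cast_add]

lemma diaD_Ioo_natCast_div_iff (hn : 0 < n) (a b k : ℕ) (φ : ℝ≥0 → Prop) :
    DiaD n (Ioo a b) φ (k / n) ↔ ∃ l, a * n < l ∧ l < b * n ∧ φ ((k + l : ℕ) / n) := by
  constructor
  · rintro ⟨_, ⟨hl, l, rfl⟩, h⟩
    obtain ⟨hl₁, hl₂⟩ := (natCast_div_mem_Ioo_iff hn a b l).1 hl
    exact ⟨l, hl₁, hl₂, by rwa [natCast_div_add_natCast_div] at h⟩
  · rintro ⟨l, hl₁, hl₂, h⟩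
    exact ⟨l / n, ⟨(natCast_div_mem_Ioo_iff hn a b l).2 ⟨hl₁, hl₂⟩, l, rfl⟩,
      by rwa [natCast_div_add_natCast_div]⟩

lemma boxD_iff_not_diaD_not (I : Set ℝ≥0) (φ : ℝ≥0 → Prop) (t : ℝ≥0) :
    BoxD n I φ t ↔ ¬ DiaD n I (fun u => ¬ φ u) t := by
  simp [BoxD, DiaD]

lemma boxD_Ioo_natCast_div_iff (hn : 0 < n) (a b k : ℕ) (φ : ℝ≥0 → Prop) :
    BoxD n (Ioo a b) φ (k / n) ↔ ∀ l, a * n < l → l < b * n → φ ((k + l : ℕ) / n) := by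
  simp [boxD_iff_not_diaD_not, diaD_Ioo_natCast_div_iff hn]

end GridTranslation

/-- `φ₁` on the grid `ℕ/n`, in units of `1/n`: `P m` stands for `p` at time `m/n`. -/
def Phi1 (n : ℕ) (P : ℕ → Prop) (k : ℕ) : Prop :=
  ∀ v, n < v → v < 2 * n →
    (∃ l, n < l ∧ l < 4 * n ∧ P (k + v + l)) ∧ ∀ l, n < l → l < 3 * n → ¬ P (k + v + l)

lemma phi1D_natCast_div_iff {n : ℕ} (hn : 0 < n) (f : ℝ≥0 → ℝ) (k : ℕ) :
    Phi1D f n (k / n) ↔ Phi1 n (fun m => SatP f (m / n)) k := by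
  have box := boxD_Ioo_natCast_div_iff (n := n) hn 1 2
  have dia₁₃ := diaD_Ioo_natCast_div_iff (n := n) hn 1 3
  have dia₁₄ := diaD_Ioo_natCast_div_iff (n := n) hn 1 4
  simp only [Nat.cast_one, Nat.cast_ofNat] at box dia₁₃ dia₁₄
  simp only [Phi1D, Phi1, box, dia₁₃, dia₁₄, one_mul, not_exists, not_and]

namespace Phi1

variable {n : ℕ} {P : ℕ → Prop} {M : ℕ}

theorem not_of_mem_gap (h : Phi1 n P M) {k : ℕ} (hk₁ : 2 * n + 2 ≤ k) (hk₂ : k + 2 ≤ 5 * n) :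
    ¬ P (M + k) := by
  set v := max (n + 1) (k + 1 - 3 * n)
  convert (h v (by omega) (by omega)).2 (k - v) (by omega) (by omega) using 2
  omega

theorem five_mul_sub_one_or_five_mul (hn : 2 ≤ n) (h : Phi1 n P M) :
    P (M + (5 * n - 1)) ∨ P (M + 5 * n) := by
  obtain ⟨⟨l, hl₁, hl₂, hP⟩, -⟩ := h (n + 1) (by omega) (by omega)
  rw [Nat.add_assoc] at hP
  by_cases hl : n + 1 + l + 2 ≤ 5 * n
  · exact absurd hP (h.not_of_mem_gap (by omega) hl)
  · rcases (by omega : n + 1 + l = 5 * n - 1 ∨ n + 1 + l = 5 * n) with hl | hl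
    exacts [.inl (hl ▸ hP), .inr (hl ▸ hP)]

theorem of_gap {w : ℕ} (hw₁ : 3 * n ≤ w) (hw₂ : w ≤ 5 * n) (hw : P (M + w))
    (hgap : ∀ k, 2 * n + 2 ≤ k → k + 2 ≤ 5 * n → ¬ P (M + k)) : Phi1 n P M := by
  refine fun v hv₁ hv₂ => ⟨⟨w - v, by omega, by omega, ?_⟩, fun l hl₁ hl₂ => ?_⟩
  · convert hw using 1; omega
  · convert hgap (v + l) (by omega) (by omega) using 2; omega

theorem left_or_right (hn : 2 ≤ n) (h : Phi1 n P (M + 1)) (hP : ¬ P (M + 2 * n + 2)) :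
    Phi1 n P M ∨ Phi1 n P (M + 2) := by
  by_cases hP₁ : P (M + 1 + (5 * n - 1))
  · refine .inl (of_gap (w := 5 * n) (by omega) le_rfl (by convert hP₁ using 1; omega)
      fun k hk₁ hk₂ => ?_)
    rcases (by omega : k = 2 * n + 2 ∨ 2 * n + 3 ≤ k) with rfl | hk
    · convert hP using 2; omega
    · convert h.not_of_mem_gap (k := k - 1) (by omega) (by omega) using 2; omega
  · have hP₂ := (h.five_mul_sub_one_or_five_mul hn).resolve_left hP₁
    refine .inr (of_gap (w := 5 * n - 1) (by omega) (by omega) (by convert hP₂ using 1; omega)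
      fun k hk₁ hk₂ => ?_)
    rcases (by omega : k + 1 = 5 * n - 1 ∨ k + 3 ≤ 5 * n) with hk | hk
    · convert hP₁ using 2; omega
    · convert h.not_of_mem_gap (k := k + 1) (by omega) hk using 2; omega

end Phi1

/-- `φ₂` on the grid `ℕ/n`, in units of `1/n`, with `Q` standing for `φ₁`. -/
def Phi2 (n : ℕ) (Q : ℕ → Prop) (k : ℕ) : Prop :=
  (∃ j, n < j ∧ j < 3 * n ∧ Q (k + j)) ∧ (∀ j, n < j → j < 2 * n → ¬ Q (k + j)) ∧
    ∀ j, 2 * n < j → j < 3 * n → ¬ Q (k + j)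

lemma phi2D_natCast_div_iff {n : ℕ} (hn : 0 < n) (f : ℝ≥0 → ℝ) (k : ℕ) :
    Phi2D f n (k / n) ↔ Phi2 n (Phi1 n (fun m => SatP f (m / n))) k := by
  have dia₁₂ := diaD_Ioo_natCast_div_iff (n := n) hn 1 2
  have dia₁₃ := diaD_Ioo_natCast_div_iff (n := n) hn 1 3
  have dia₂₃ := diaD_Ioo_natCast_div_iff (n := n) hn 2 3
  simp only [Nat.cast_one, Nat.cast_ofNat] at dia₁₂ dia₁₃ dia₂₃
  simp only [Phi2D, Phi2, dia₁₂, dia₁₃, dia₂₃, phi1D_natCast_div_iff hn, one_mul, not_exists,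
    not_and]

theorem Phi2.isolated {n : ℕ} {Q : ℕ → Prop} {k : ℕ} (hn : 2 ≤ n) (h : Phi2 n Q k) :
    Q (k + (2 * n - 1) + 1) ∧ ¬ Q (k + (2 * n - 1)) ∧ ¬ Q (k + (2 * n - 1) + 2) := by
  obtain ⟨⟨j, hj₁, hj₂, hQ⟩, hl, hr⟩ := h
  obtain rfl : j = 2 * n := by
    by_contra hj
    rcases lt_or_gt_of_ne hj with hj | hj
    exacts [hl j hj₁ hj hQ, hr j hj hj₂ hQ]
  refine ⟨?_, hl _ (by omega) (by omega), ?_⟩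
  · convert hQ using 1; omega
  · convert hr (2 * n + 1) (by omega) (by omega) using 2; omega

theorem not_phi2_phi1 {n : ℕ} {P : ℕ → Prop} {k : ℕ} (hn : 2 ≤ n) (hP : ¬ P (k + 4 * n + 1)) :
    ¬ Phi2 n (Phi1 n P) k := fun h => by
  obtain ⟨hφ₁, hl, hr⟩ := h.isolated hn
  refine (Phi1.left_or_right hn hφ₁ ?_).elim hl hr
  convert hP using 2; omega

/-- for every natural `n ≥ 2` and every `f : [0,∞) → ℝ`, the discrete
semantics of `ψ` fails at time `0`. -/
theorem stmt_8 (n : ℕ) (hn : 2 ≤ n) (f : ℝ≥0 → ℝ) : ¬ PsiD f n 0 := by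
  have hn₀ : 0 < n := by omega
  have dia₀₈ := diaD_Ioo_natCast_div_iff hn₀ 0 8 0 (SatP f)
  have dia₁₂ := diaD_Ioo_natCast_div_iff hn₀ 1 2 0 (Phi2D f n)
  simp only [Nat.cast_zero, Nat.cast_one, Nat.cast_ofNat, zero_div, zero_add, zero_mul,
    one_mul] at dia₀₈ dia₁₂
  rintro ⟨-, hp, hφ₃⟩
  obtain ⟨i, -, hi, hφ₂⟩ := dia₁₂.1 hφ₃
  refine not_phi2_phi1 hn (fun h => hp (dia₀₈.2 ⟨_, by omega, by omega, h⟩))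
    ((phi2D_natCast_div_iff hn₀ f i).1 hφ₂)
end

section
/- Let (Ω,F,P) be a complete probability space and X : [0,∞) → Ω → ℝ a process such that each X_t is F-measurable and there is a P-null set off which: the path t ↦ X_t(ω) is continuous, for every c ∈ {x₁,y₁,…,x_k,y_k} the level set {t : X_t(ω) = c} has no isolated points, and every local maximum and local minimum of the path is strict. Assume further that for every t ∈ (0,∞) the law of X_t is absolutely continuous with respect to Lebesgue measure. Let B := ⋃_{i=1}^k I_i where the I_i are intervals with endpoints x_i < y_i, (x_i,y_i) ⊆ I_i ⊆ [x_i,y_i], and pairwise disjoint closures; let I ⊆ [0,∞) be an interval with (S,T) ⊆ I ⊆ [S,T] for some reals 0 ≤ S < T. Then for every t ∈ [0,∞): (a) for P-a.e. ω there is N such that for all n ≥ N, (∃ s ∈ I ∩ ℕ/n, X_{⌊nt⌋/n + s}(ω) ∈ B) ⟺ (∃ s ∈ I, X_{t+s}(ω) ∈ B), and likewise with ∃ replaced by ∀; (b) the sets {ω : ∃ s ∈ I, X_{t+s}(ω) ∈ B} and {ω : ∀ s ∈ I, X_{t+s}(ω) ∈ B} are F-measurable, and P({ω : ∃ s ∈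 I ∩ ℕ/n, X_{⌊nt⌋/n+s}(ω) ∈ B}) → P({ω : ∃ s ∈ I, X_{t+s}(ω) ∈ B}) and P({ω : ∀ s ∈ I ∩ ℕ/n, X_{⌊nt⌋/n+s}(ω) ∈ B}) → P({ω : ∀ s ∈ I, X_{t+s}(ω) ∈ B}) as n → ∞. -/
open MeasureTheory Filter
open scoped NNReal ENNReal Topology

/-- `Λ_n(t) := ⌊nt⌋/n`. -/
noncomputable def Lam (n : ℕ) (t : ℝ≥0) : ℝ≥0 := (⌊(n : ℝ≥0) * t⌋₊ : ℝ≥0) / (n : ℝ≥0)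

/-- `t` is a point of local maximum of `f : [0,∞) → ℝ`. -/
def IsLocMaxPt (f : ℝ≥0 → ℝ) (t : ℝ≥0) : Prop :=
  ∃ δ : ℝ≥0, 0 < δ ∧ ∀ s, t - δ ≤ s → s ≤ t + δ → f s ≤ f t

/-- `t` is a point of strict local maximum of `f`. -/
def IsStrictLocMaxPt (f : ℝ≥0 → ℝ) (t : ℝ≥0) : Prop :=
  ∃ δ : ℝ≥0, 0 < δ ∧ ∀ s, t - δ ≤ s → s ≤ t + δ → s ≠ t → f s < f t

/-- `t` is a point of local minimum of `f`. -/
def IsLocMinPt (f : ℝ≥0 → ℝ) (t : ℝ≥0) : Prop :=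
  ∃ δ : ℝ≥0, 0 < δ ∧ ∀ s, t - δ ≤ s → s ≤ t + δ → f t ≤ f s

/-- `t` is a point of strict local minimum of `f`. -/
def IsStrictLocMinPt (f : ℝ≥0 → ℝ) (t : ℝ≥0) : Prop :=
  ∃ δ : ℝ≥0, 0 < δ ∧ ∀ s, t - δ ≤ s → s ≤ t + δ → s ≠ t → f t < f s

/-!
Fix a path `f = X(·, ω)` outside a null set. Let `U = ⋃ (xᵢ, yᵢ)`, `V` the complement of
`⋃ [xᵢ, yᵢ]` and `E` the set of endpoints, so that `U ⊆ B`, `V ∩ B = ∅` and `ℝ = U ∪ V ∪ E`.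
Absolute continuity of the laws makes `f(t + S)` (if `t + S > 0`) and `f(t + T)` avoid `E`.
At a time `u` with `f u ∈ E` the level set is not isolated, so by strictness `u` is neither a
local maximum nor a local minimum, and `f` takes values just above and just below `f u` near
`u`: it enters both `U` and `V` arbitrarily close to `u`.

Hence if some time of the window `t + I` is mapped into `B` (resp. outside `B`), then some
interior time of the window is mapped into the open set `U` (resp. `V`), and the grid points
`Λₙ(t) + I ∩ ℕ/n` eventually come close to it. Conversely, the grid window differs from
`t + I` only by times in `(t + S - 1/n, t + S]`, where `f` stays in whichever of `U`, `V`
contains `f(t + S)`. Measurability of the limit events follows from completeness, and the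
convergence of probabilities from dominated convergence.
-/

open Set

theorem Filter.eventually_iff_of_imp {ι : Type*} {l : Filter ι} {p : Prop} {q : ι → Prop}
    (h₁ : p → ∀ᶠ n in l, q n) (h₂ : ¬p → ∀ᶠ n in l, ¬q n) : ∀ᶠ n in l, (q n ↔ p) := by
  by_cases hp : p
  · exact (h₁ hp).mono fun n hn => iff_of_true hn hp
  · exact (h₂ hp).mono fun n hn => iff_of_false hn hp

theorem Set.OrdConnected.of_Ioo_subset_of_subset_Icc {α : Type*} [PartialOrder α] {a b : α}
    {s : Set α} (h₁ : Ioo a b ⊆ s) (h₂ : s ⊆ Icc a b) : s.OrdConnected :=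
  ordConnected_of_Ioo fun _ hp _ hq _ => (Ioo_subset_Ioo (h₂ hp).1 (h₂ hq).2).trans h₁

theorem exists_mem_Ioo_of_mem_Icc {α : Type*} [LinearOrder α] [TopologicalSpace α]
    [OrderTopology α] [DenselyOrdered α] {a b u : α} {N : Set α} (hab : a < b)
    (hu : u ∈ Icc a b) (hN : N ∈ 𝓝 u) : ∃ v ∈ Ioo a b, v ∈ N := by
  rw [← closure_Ioo hab.ne] at hu
  exact (mem_closure_iff_nhds.mp hu N hN).imp fun v hv => ⟨hv.2, hv.1⟩

theorem NNReal.nhds_basis_Icc_tsub (u : ℝ≥0) :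
    (𝓝 u).HasBasis (0 < ·) fun δ => Icc (u - δ) (u + δ) := by
  rcases eq_zero_or_pos u with rfl | hu
  · simp_rw [zero_tsub, zero_add, ← bot_eq_zero, Icc_bot]
    exact nhds_bot_basis_Iic.to_hasBasis (fun δ hδ => ⟨δ, hδ, le_rfl⟩)
      fun δ hδ => ⟨δ, hδ, le_rfl⟩
  · refine (nhds_basis_Ioo' ⟨0, hu⟩ ⟨u + 1, lt_add_one u⟩).to_hasBasis ?_ fun δ hδ =>
      ⟨(u - δ, u + δ), ⟨tsub_lt_self hu hδ, lt_add_of_pos_right u hδ⟩, Ioo_subset_Icc_self⟩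
    rintro ⟨a, b⟩ ⟨ha, hb⟩
    obtain ⟨δ, hδ, hδa⟩ := exists_between (tsub_pos_of_lt ha)
    have hε : 0 < min δ ((b - u) / 2) := lt_min hδ (half_pos (tsub_pos_of_lt hb))
    refine ⟨_, hε, Icc_subset_Ioo ?_ ?_⟩
    · exact lt_tsub_comm.mp ((min_le_left _ _).trans_lt hδa)
    · exact lt_tsub_iff_left.mp
        ((min_le_right _ _).trans_lt (half_lt_self (tsub_pos_of_lt hb).ne'))

theorem NNReal.Ioo_mem_nhdsNE {a b u : ℝ≥0} (hab : a < b)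
    (hu : u ∈ Ioo a b ∨ u = 0 ∧ a = 0) : Ioo a b ∈ 𝓝[≠] u := by
  rcases hu with hu | ⟨rfl, rfl⟩
  · exact mem_nhdsWithin_of_mem_nhds (isOpen_Ioo.mem_nhds hu)
  · rw [show ({0}ᶜ : Set ℝ≥0) = Ioi 0 by ext; simp [pos_iff_ne_zero]]
    exact Ioo_mem_nhdsGT hab

theorem lam_zero (n : ℕ) : Lam n 0 = 0 := by simp [Lam]

theorem lam_le (n : ℕ) (t : ℝ≥0) : Lam n t ≤ t := by
  rcases Nat.eq_zero_or_pos n with rfl | hn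
  · simp [Lam]
  · rw [Lam, div_le_iff₀ (by exact_mod_cast hn), mul_comm]
    exact Nat.floor_le zero_le

theorem lam_mono (n : ℕ) : Monotone (Lam n) := fun s t hst => by
  unfold Lam; gcongr

theorem tendsto_lam (t : ℝ≥0) : Tendsto (fun n => Lam n t) atTop (𝓝 t) := by
  rw [← NNReal.tendsto_coe]
  have := (tendsto_nat_floor_mul_div_atTop t.2).comp (tendsto_natCast_atTop_atTop (R := ℝ))
  refine this.congr fun n => ?_
  simp only [Function.comp_apply, Lam, NNReal.coe_div, NNReal.coe_natCast, mul_comm]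
  rfl

theorem lam_sub_lam_mem_grid (n : ℕ) (t v : ℝ≥0) : Lam n v - Lam n t ∈ grid n :=
  ⟨⌊(n : ℝ≥0) * v⌋₊ - ⌊(n : ℝ≥0) * t⌋₊, by
    rw [Nat.cast_tsub, NNReal.sub_div]; rfl⟩

theorem countable_grid (n : ℕ) : (grid n).Countable :=
  (countable_range fun k : ℕ => (k : ℝ≥0) / n).mono <| by rintro _ ⟨k, rfl⟩; exact ⟨k, rfl⟩

section Window

variable {S T t : ℝ≥0} {I : Set ℝ≥0} {f : ℝ≥0 → ℝ} {Q A A' E : Set ℝ}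

theorem exists_mem_add_eq (hI₁ : Ioo S T ⊆ I) {v : ℝ≥0} (hv : v ∈ Ioo (t + S) (t + T)) :
    ∃ s ∈ I, t + s = v := by
  have htv : t ≤ v := le_self_add.trans hv.1.le
  refine ⟨v - t, hI₁ ⟨lt_tsub_iff_left.mpr hv.1, (tsub_lt_iff_left htv).mpr hv.2⟩,
    add_tsub_cancel_of_le htv⟩

theorem eventually_exists_grid_mem (hI₁ : Ioo S T ⊆ I) {v : ℝ≥0}
    (hv : v ∈ Ioo (t + S) (t + T)) {A : Set ℝ≥0} (hA : A ∈ 𝓝 v) :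
    ∀ᶠ n in atTop, ∃ s ∈ I ∩ grid n, Lam n t + s ∈ A := by
  have htv : t ≤ v := le_self_add.trans hv.1.le
  have hvt : v - t ∈ Ioo S T :=
    ⟨lt_tsub_iff_left.mpr hv.1, (tsub_lt_iff_left htv).mpr hv.2⟩
  filter_upwards [((tendsto_lam v).sub (tendsto_lam t)).eventually (isOpen_Ioo.mem_nhds hvt),
    (tendsto_lam v).eventually hA] with n hI hA
  refine ⟨Lam n v - Lam n t, ⟨hI₁ hI, lam_sub_lam_mem_grid n t v⟩, ?_⟩
  rwa [add_tsub_cancel_of_le (lam_mono n htv)]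

theorem eventually_lam_add_mem (hI₁ : Ioo S T ⊆ I) (hI₂ : I ⊆ Icc S T) {N : Set ℝ≥0}
    (hN : N ∈ 𝓝 (t + S)) :
    ∀ᶠ n in atTop, ∀ s ∈ I, (∃ s' ∈ I, Lam n t + s = t + s') ∨ Lam n t + s ∈ N := by
  rcases eq_zero_or_pos t with rfl | ht
  · exact .of_forall fun n s hs => .inl ⟨s, hs, by rw [lam_zero]⟩
  obtain ⟨l, hl, hlN⟩ := exists_Ioc_subset_of_mem_nhds hN ⟨0, add_pos_of_pos_of_nonneg ht zero_le⟩
  filter_upwards [((tendsto_lam t).add_const S).eventually (lt_mem_nhds hl)] with n hn s hs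
  rcases (lam_le n t).eq_or_lt with h | h
  · exact .inl ⟨s, hs, by rw [h]⟩
  by_cases hS : t + S < Lam n t + s
  · obtain ⟨s', hs', heq⟩ := exists_mem_add_eq hI₁ ⟨hS, add_lt_add_of_lt_of_le h (hI₂ hs).2⟩
    exact .inl ⟨s', hs', heq.symm⟩
  · exact .inr (hlN ⟨hn.trans_le (add_le_add_right (hI₂ hs).1 _), not_lt.mp hS⟩)

theorem eventually_exists_grid_of_exists (hI₁ : Ioo S T ⊆ I) (hI₂ : I ⊆ Icc S T) (hST : S < T)
    (hf : Continuous f) (hA : IsOpen A) (hAQ : A ⊆ Q) (hQA' : Disjoint Q A')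
    (hE : Eᶜ ⊆ A ∪ A') (hcross : ∀ u, f u ∈ E → ∃ᶠ v in 𝓝[≠] u, f v ∈ A)
    (hS : 0 < t + S → f (t + S) ∉ E) (hT : f (t + T) ∉ E) (h : ∃ s ∈ I, f (t + s) ∈ Q) :
    ∀ᶠ n in atTop, ∃ s ∈ I ∩ grid n, f (Lam n t + s) ∈ Q := by
  obtain ⟨s, hs, hsQ⟩ := h
  have hW : t + S < t + T := add_lt_add_right hST t
  have hu : t + s ∈ Icc (t + S) (t + T) :=
    ⟨add_le_add_right (hI₂ hs).1 t, add_le_add_right (hI₂ hs).2 t⟩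
  obtain ⟨v, hv, hvA⟩ : ∃ v ∈ Ioo (t + S) (t + T), f v ∈ A := by
    by_cases huE : f (t + s) ∈ E
    · have hWu : Ioo (t + S) (t + T) ∈ 𝓝[≠] (t + s) := by
        refine NNReal.Ioo_mem_nhdsNE hW ?_
        rcases hu.1.eq_or_lt with heq | hlt
        · have h0 : t + S = 0 := by
            by_contra h0
            exact hS (pos_iff_ne_zero.mpr h0) (heq ▸ huE)
          exact .inr ⟨heq ▸ h0, h0⟩
        · exact .inl ⟨hlt, hu.2.lt_of_ne fun h => hT (h ▸ huE)⟩
      exact ((hcross _ huE).and_eventually hWu).exists.imp fun v h => ⟨h.2, h.1⟩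
    · have huA : f (t + s) ∈ A := (hE huE).resolve_right (hQA'.notMem_of_mem_left hsQ)
      exact exists_mem_Ioo_of_mem_Icc hW hu (hf.continuousAt.preimage_mem_nhds (hA.mem_nhds huA))
  filter_upwards [eventually_exists_grid_mem hI₁ hv
    (hf.continuousAt.preimage_mem_nhds (hA.mem_nhds hvA))] with n ⟨s', hs', hs'A⟩
  exact ⟨s', hs', hAQ hs'A⟩

theorem eventually_forall_grid_of_forall (hI₁ : Ioo S T ⊆ I) (hI₂ : I ⊆ Icc S T) (hST : S < T)
    (hf : Continuous f) (hA : IsOpen A) (hA' : IsOpen A') (hAQ : A ⊆ Q) (hQA' : Disjoint Q A')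
    (hE : Eᶜ ⊆ A ∪ A') (hS : 0 < t + S → f (t + S) ∉ E) (h : ∀ s ∈ I, f (t + s) ∈ Q) :
    ∀ᶠ n in atTop, ∀ s ∈ I, f (Lam n t + s) ∈ Q := by
  rcases eq_zero_or_pos t with rfl | ht
  · exact .of_forall fun n s hs => by simpa [lam_zero] using h s hs
  have hSA : f (t + S) ∈ A := by
    refine (hE (hS (add_pos_of_pos_of_nonneg ht zero_le))).resolve_right fun hSA' => ?_
    have hW : t + S < t + T := add_lt_add_right hST t
    obtain ⟨v, hv, hvA'⟩ := exists_mem_Ioo_of_mem_Icc hW ⟨le_rfl, hW.le⟩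
      (hf.continuousAt.preimage_mem_nhds (hA'.mem_nhds hSA'))
    obtain ⟨s, hs, rfl⟩ := exists_mem_add_eq hI₁ hv
    exact hQA'.notMem_of_mem_left (h s hs) hvA'
  filter_upwards [eventually_lam_add_mem hI₁ hI₂
    (hf.continuousAt.preimage_mem_nhds (hA.mem_nhds hSA))] with n hn s hs
  rcases hn s hs with ⟨s', hs', heq⟩ | hsA
  · exact heq ▸ h s' hs'
  · exact hAQ hsA

theorem eventually_grid_semantics_iff (hI₁ : Ioo S T ⊆ I) (hI₂ : I ⊆ Icc S T) (hST : S < T)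
    (hf : Continuous f) {U V B : Set ℝ} (hU : IsOpen U) (hV : IsOpen V) (hUB : U ⊆ B)
    (hBV : Disjoint B V) (hE : Eᶜ ⊆ U ∪ V)
    (hcross : ∀ u, f u ∈ E → (∃ᶠ v in 𝓝[≠] u, f v ∈ U) ∧ ∃ᶠ v in 𝓝[≠] u, f v ∈ V)
    (hS : 0 < t + S → f (t + S) ∉ E) (hT : f (t + T) ∉ E) :
    ∀ᶠ n in atTop,
      ((∃ s ∈ I ∩ grid n, f (Lam n t + s) ∈ B) ↔ ∃ s ∈ I, f (t + s) ∈ B) ∧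
      ((∀ s ∈ I ∩ grid n, f (Lam n t + s) ∈ B) ↔ ∀ s ∈ I, f (t + s) ∈ B) := by
  have hBcU : Disjoint Bᶜ U := disjoint_compl_left_iff_subset.mpr hUB
  have hVBc : V ⊆ Bᶜ := hBV.subset_compl_left
  have hE' : Eᶜ ⊆ V ∪ U := union_comm U V ▸ hE
  refine (eventually_iff_of_imp ?_ ?_).and (eventually_iff_of_imp ?_ ?_)
  · exact eventually_exists_grid_of_exists hI₁ hI₂ hST hf hU hUB hBV hE
      (fun u hu => (hcross u hu).1) hS hT
  · intro h
    push Not at h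
    filter_upwards [eventually_forall_grid_of_forall hI₁ hI₂ hST hf hV hU hVBc hBcU hE' hS h]
      with n hn ⟨s, hs, hsB⟩ using hn s hs.1 hsB
  · intro h
    filter_upwards [eventually_forall_grid_of_forall hI₁ hI₂ hST hf hU hV hUB hBV hE hS h]
      with n hn s hs using hn s hs.1
  · intro h
    push Not at h
    filter_upwards [eventually_exists_grid_of_exists hI₁ hI₂ hST hf hV hVBc hBcU hE'
      (fun u hu => (hcross u hu).2) hS hT h] with n ⟨s, hs, hsB⟩ h' using hsB (h' s hs)

end Window

section Extrema

variable {f : ℝ≥0 → ℝ} {u : ℝ≥0}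

theorem isLocMinPt_iff : IsLocMinPt f u ↔ IsLocalMin f u := by
  simp only [IsLocMinPt, IsLocalMin, IsMinFilter, (NNReal.nhds_basis_Icc_tsub u).eventually_iff,
    mem_Icc, and_imp]

theorem isLocMaxPt_iff : IsLocMaxPt f u ↔ IsLocalMax f u := by
  simp only [IsLocMaxPt, IsLocalMax, IsMaxFilter, (NNReal.nhds_basis_Icc_tsub u).eventually_iff,
    mem_Icc, and_imp]

theorem isStrictLocMinPt_iff : IsStrictLocMinPt f u ↔ ∀ᶠ v in 𝓝[≠] u, f u < f v := by
  simp only [IsStrictLocMinPt, eventually_nhdsWithin_iff,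
    (NNReal.nhds_basis_Icc_tsub u).eventually_iff, mem_Icc, and_imp, mem_compl_singleton_iff]

theorem isStrictLocMaxPt_iff : IsStrictLocMaxPt f u ↔ ∀ᶠ v in 𝓝[≠] u, f v < f u := by
  simp only [IsStrictLocMaxPt, eventually_nhdsWithin_iff,
    (NNReal.nhds_basis_Icc_tsub u).eventually_iff, mem_Icc, and_imp, mem_compl_singleton_iff]

theorem frequently_lt_of_frequently_eq (hacc : ∃ᶠ v in 𝓝[≠] u, f v = f u)
    (hmin : IsLocMinPt f u → IsStrictLocMinPt f u) : ∃ᶠ v in 𝓝 u, f v < f u := by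
  by_contra h
  simp only [not_frequently, not_lt] at h
  exact hacc ((isStrictLocMinPt_iff.mp (hmin (isLocMinPt_iff.mpr h))).mono fun v hv => hv.ne')

theorem frequently_gt_of_frequently_eq (hacc : ∃ᶠ v in 𝓝[≠] u, f v = f u)
    (hmax : IsLocMaxPt f u → IsStrictLocMaxPt f u) : ∃ᶠ v in 𝓝 u, f u < f v := by
  by_contra h
  simp only [not_frequently, not_lt] at h
  exact hacc ((isStrictLocMaxPt_iff.mp (hmax (isLocMaxPt_iff.mpr h))).mono fun v hv => hv.ne)

theorem frequently_nhdsNE_mem (hf : ContinuousAt f u) (hlt : ∃ᶠ v in 𝓝 u, f v < f u)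
    (hgt : ∃ᶠ v in 𝓝 u, f u < f v) {N A : Set ℝ} (hN : N ∈ 𝓝 (f u))
    (hA : N ∩ Iio (f u) ⊆ A ∨ N ∩ Ioi (f u) ⊆ A) : ∃ᶠ v in 𝓝[≠] u, f v ∈ A := by
  rw [frequently_nhdsWithin_iff]
  rcases hA with hA | hA
  · exact (hlt.and_eventually (hf hN)).mono fun v ⟨hv, hvN⟩ =>
      ⟨hA ⟨hvN, hv⟩, ne_of_apply_ne f hv.ne⟩
  · exact (hgt.and_eventually (hf hN)).mono fun v ⟨hv, hvN⟩ =>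
      ⟨hA ⟨hvN, hv⟩, ne_of_apply_ne f hv.ne'⟩

end Extrema

section Intervals

variable {k : ℕ} {x y : Fin k → ℝ}

theorem countable_endpoints : {c | ∃ i, c = x i ∨ c = y i}.Countable :=
  ((finite_range x).union (finite_range y)).countable.mono
    fun _ ⟨i, hi⟩ => hi.elim (fun h => .inl ⟨i, h.symm⟩) fun h => .inr ⟨i, h.symm⟩

theorem compl_endpoints_subset :
    {c | ∃ i, c = x i ∨ c = y i}ᶜ ⊆ (⋃ i, Ioo (x i) (y i)) ∪ (⋃ i, Icc (x i) (y i))ᶜ := by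
  intro z hz
  by_cases hzK : z ∈ ⋃ i, Icc (x i) (y i)
  · obtain ⟨i, hx, hy⟩ := mem_iUnion.mp hzK
    refine .inl (mem_iUnion.mpr ⟨i, hx.lt_of_ne ?_, hy.lt_of_ne ?_⟩)
    · exact fun h => hz ⟨i, .inl h.symm⟩
    · exact fun h => hz ⟨i, .inr h⟩
  · exact .inr hzK

theorem exists_nhds_endpoint (hxy : ∀ i, x i < y i)
    (hdisj : ∀ i j, i ≠ j → Icc (x i) (y i) ∩ Icc (x j) (y j) = ∅) {c : ℝ}
    (hc : ∃ i, c = x i ∨ c = y i) :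
    ∃ N ∈ 𝓝 c,
      (N ∩ Iio c ⊆ (⋃ i, Icc (x i) (y i))ᶜ ∧ N ∩ Ioi c ⊆ ⋃ i, Ioo (x i) (y i)) ∨
      (N ∩ Iio c ⊆ ⋃ i, Ioo (x i) (y i) ∧ N ∩ Ioi c ⊆ (⋃ i, Icc (x i) (y i))ᶜ) := by
  obtain ⟨i, hi⟩ := hc
  set K' := ⋃ (j) (_ : j ≠ i), Icc (x j) (y j)
  have hK' : IsClosed K' :=
    isClosed_iUnion_of_finite fun j => isClosed_iUnion_of_finite fun _ => isClosed_Icc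
  have hK'c : ∀ z ∈ Icc (x i) (y i), K'ᶜ ∈ 𝓝 z := by
    refine fun z hz => hK'.isOpen_compl.mem_nhds fun hzK' => ?_
    obtain ⟨j, hji, hj⟩ := mem_iUnion₂.mp hzK'
    exact (hdisj i j (Ne.symm hji)).subset ⟨hz, hj⟩
  have hmemK : ∀ z ∉ K', z ∈ ⋃ j, Icc (x j) (y j) → z ∈ Icc (x i) (y i) := by
    intro z hzK' hzK
    obtain ⟨j, hj⟩ := mem_iUnion.mp hzK
    by_cases hji : j = i
    · exact hji ▸ hj
    · exact absurd (mem_iUnion₂.mpr ⟨j, hji, hj⟩) hzK'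
  rcases hi with rfl | rfl
  · refine ⟨Iio (y i) ∩ K'ᶜ, inter_mem (Iio_mem_nhds (hxy i))
      (hK'c _ (left_mem_Icc.mpr (hxy i).le)), .inl ⟨?_, ?_⟩⟩
    · exact fun z ⟨⟨_, hzK'⟩, hzx⟩ hzK => (hmemK z hzK' hzK).1.not_gt hzx
    · exact fun z ⟨⟨hzy, _⟩, hzx⟩ => mem_iUnion.mpr ⟨i, hzx, hzy⟩
  · refine ⟨Ioi (x i) ∩ K'ᶜ, inter_mem (Ioi_mem_nhds (hxy i))
      (hK'c _ (right_mem_Icc.mpr (hxy i).le)), .inr ⟨?_, ?_⟩⟩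
    · exact fun z ⟨⟨hzx, _⟩, hzy⟩ => mem_iUnion.mpr ⟨i, hzx, hzy⟩
    · exact fun z ⟨⟨_, hzK'⟩, hzy⟩ hzK => (hmemK z hzK' hzK).2.not_gt hzy

theorem frequently_mem_of_endpoint (hxy : ∀ i, x i < y i)
    (hdisj : ∀ i j, i ≠ j → Icc (x i) (y i) ∩ Icc (x j) (y j) = ∅) {f : ℝ≥0 → ℝ} {u : ℝ≥0}
    (hf : ContinuousAt f u) (hu : ∃ i, f u = x i ∨ f u = y i)
    (hacc : 𝓝[{v | f v = f u} \ {u}] u ≠ ⊥)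
    (hmax : IsLocMaxPt f u → IsStrictLocMaxPt f u)
    (hmin : IsLocMinPt f u → IsStrictLocMinPt f u) :
    (∃ᶠ v in 𝓝[≠] u, f v ∈ ⋃ i, Ioo (x i) (y i)) ∧
      ∃ᶠ v in 𝓝[≠] u, f v ∈ (⋃ i, Icc (x i) (y i))ᶜ := by
  have hacc' : ∃ᶠ v in 𝓝[≠] u, f v = f u := by
    rwa [frequently_iff_neBot, ← nhdsWithin_inter', ← sdiff_eq_compl_inter, neBot_iff]
  have hlt := frequently_lt_of_frequently_eq hacc' hmin
  have hgt := frequently_gt_of_frequently_eq hacc' hmax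
  obtain ⟨N, hN, h⟩ := exists_nhds_endpoint hxy hdisj hu
  have key := fun A hA => frequently_nhdsNE_mem hf hlt hgt (A := A) hN hA
  rcases h with ⟨hl, hr⟩ | ⟨hl, hr⟩
  · exact ⟨key _ (.inr hr), key _ (.inl hl)⟩
  · exact ⟨key _ (.inl hl), key _ (.inr hr)⟩

theorem eventually_grid_semantics_iff_of_intervals {S T t : ℝ≥0} {I : Set ℝ≥0}
    (hI₁ : Ioo S T ⊆ I) (hI₂ : I ⊆ Icc S T) (hST : S < T) {J : Fin k → Set ℝ}
    (hxy : ∀ i, x i < y i) (hJ : ∀ i, Ioo (x i) (y i) ⊆ J i ∧ J i ⊆ Icc (x i) (y i))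
    (hdisj : ∀ i j, i ≠ j → Icc (x i) (y i) ∩ Icc (x j) (y j) = ∅) {f : ℝ≥0 → ℝ}
    (hf : Continuous f)
    (hlev : ∀ c : ℝ, (∃ i, c = x i ∨ c = y i) →
      ∀ u : ℝ≥0, f u = c → 𝓝[{v : ℝ≥0 | f v = c} \ {u}] u ≠ ⊥)
    (hmax : ∀ u, IsLocMaxPt f u → IsStrictLocMaxPt f u)
    (hmin : ∀ u, IsLocMinPt f u → IsStrictLocMinPt f u)
    (hS : 0 < t + S → f (t + S) ∉ {c | ∃ i, c = x i ∨ c = y i})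
    (hT : f (t + T) ∉ {c | ∃ i, c = x i ∨ c = y i}) :
    ∀ᶠ n in atTop,
      ((∃ s ∈ I ∩ grid n, f (Lam n t + s) ∈ ⋃ i, J i) ↔ ∃ s ∈ I, f (t + s) ∈ ⋃ i, J i) ∧
      ((∀ s ∈ I ∩ grid n, f (Lam n t + s) ∈ ⋃ i, J i) ↔ ∀ s ∈ I, f (t + s) ∈ ⋃ i, J i) :=
  eventually_grid_semantics_iff hI₁ hI₂ hST hf (isOpen_iUnion fun _ => isOpen_Ioo)
    (isClosed_iUnion_of_finite fun _ => isClosed_Icc).isOpen_compl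
    (iUnion_mono fun i => (hJ i).1)
    (disjoint_compl_right_iff_subset.mpr (iUnion_mono fun i => (hJ i).2))
    compl_endpoints_subset
    (fun u hu => frequently_mem_of_endpoint hxy hdisj hf.continuousAt hu (hlev _ hu u rfl) (hmax u) (hmin u))
    hS hT

end Intervals

theorem ae_notMem_of_map_absolutelyContinuous {Ω : Type*} [MeasurableSpace Ω] {P : Measure Ω}
    {Y : Ω → ℝ} (hY : Measurable Y) (hac : P.map Y ≪ volume) {E : Set ℝ} (hE : E.Countable) :
    ∀ᵐ ω ∂P, Y ω ∉ E :=
  ae_of_ae_map hY.aemeasurable (hac.ae_le (measure_eq_zero_iff_ae_notMem.mp (hE.measure_zero _)))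

theorem measurableSet_and_tendsto_measure_of_ae_eventually_iff {Ω : Type*}
    [MeasurableSpace Ω] {P : Measure Ω} [IsFiniteMeasure P] [P.IsComplete] {D : ℕ → Set Ω}
    {C : Set Ω} (hD : ∀ n, MeasurableSet (D n))
    (h : ∀ᵐ ω ∂P, ∀ᶠ n in atTop, ω ∈ D n ↔ ω ∈ C) :
    MeasurableSet C ∧ Tendsto (fun n => P (D n)) atTop (𝓝 (P C)) := by
  have hC : MeasurableSet C :=
    (nullMeasurableSet_of_tendsto_indicator atTop (fun n => (hD n).nullMeasurableSet)
      h).measurable_of_complete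
  exact ⟨hC, tendsto_measure_of_ae_tendsto_indicator_of_isFiniteMeasure atTop hC hD h⟩

/-- convergence of the discretized semantics of `◇_I p` and `□_I p` to the
continuous semantics, where `p` holds at `s` iff `X_s ∈ B = ⋃ᵢ Iᵢ` (pairwise separated
nondegenerate intervals), both pathwise (eventually, almost every `ω`) and in probability. -/
theorem stmt_16 {Ω : Type*} [MeasurableSpace Ω] (P : Measure Ω) [IsProbabilityMeasure P]
    [P.IsComplete] (X : ℝ≥0 → Ω → ℝ)
    (hXt : ∀ t : ℝ≥0, Measurable fun ω => X t ω)
    (k : ℕ) (x y : Fin k → ℝ) (J : Fin k → Set ℝ)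
    (hxy : ∀ i, x i < y i)
    (hJ : ∀ i, Set.Ioo (x i) (y i) ⊆ J i ∧ J i ⊆ Set.Icc (x i) (y i))
    (hdisj : ∀ i j, i ≠ j → Set.Icc (x i) (y i) ∩ Set.Icc (x j) (y j) = ∅)
    (hgood : ∀ᵐ ω ∂P, Continuous (fun u => X u ω) ∧
      (∀ c : ℝ, (∃ i, c = x i ∨ c = y i) →
        ∀ u : ℝ≥0, X u ω = c → 𝓝[{v : ℝ≥0 | X v ω = c} \ {u}] u ≠ ⊥) ∧
      (∀ u, IsLocMaxPt (fun v => X v ω) u → IsStrictLocMaxPt (fun v => X v ω) u) ∧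
      (∀ u, IsLocMinPt (fun v => X v ω) u → IsStrictLocMinPt (fun v => X v ω) u))
    (habs : ∀ u : ℝ≥0, 0 < u → P.map (fun ω => X u ω) ≪ (volume : Measure ℝ))
    (S T : ℝ≥0) (hST : S < T) (I : Set ℝ≥0)
    (hI₁ : Set.Ioo S T ⊆ I) (hI₂ : I ⊆ Set.Icc S T) (t : ℝ≥0) :
    (∀ᵐ ω ∂P, ∃ N : ℕ, ∀ n ≥ N,
        ((∃ s ∈ I ∩ grid n, X (Lam n t + s) ω ∈ ⋃ i, J i) ↔
          ∃ s ∈ I, X (t + s) ω ∈ ⋃ i, J i) ∧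
        ((∀ s ∈ I ∩ grid n, X (Lam n t + s) ω ∈ ⋃ i, J i) ↔
          ∀ s ∈ I, X (t + s) ω ∈ ⋃ i, J i)) ∧
      MeasurableSet {ω | ∃ s ∈ I, X (t + s) ω ∈ ⋃ i, J i} ∧
      MeasurableSet {ω | ∀ s ∈ I, X (t + s) ω ∈ ⋃ i, J i} ∧
      Tendsto (fun n : ℕ => P {ω | ∃ s ∈ I ∩ grid n, X (Lam n t + s) ω ∈ ⋃ i, J i})
        atTop (𝓝 (P {ω | ∃ s ∈ I, X (t + s) ω ∈ ⋃ i, J i})) ∧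
      Tendsto (fun n : ℕ => P {ω | ∀ s ∈ I ∩ grid n, X (Lam n t + s) ω ∈ ⋃ i, J i})
        atTop (𝓝 (P {ω | ∀ s ∈ I, X (t + s) ω ∈ ⋃ i, J i})) := by
  set B := ⋃ i, J i
  set E : Set ℝ := {c | ∃ i, c = x i ∨ c = y i}
  have hE : E.Countable := countable_endpoints
  have hB : MeasurableSet B := .iUnion fun i => (OrdConnected.of_Ioo_subset_of_subset_Icc
    (hJ i).1 (hJ i).2).measurableSet
  have hS : ∀ᵐ ω ∂P, 0 < t + S → X (t + S) ω ∉ E := eventually_imp_distrib_left.mpr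
    fun h => ae_notMem_of_map_absolutelyContinuous (hXt _) (habs _ h) hE
  have hT : ∀ᵐ ω ∂P, X (t + T) ω ∉ E := ae_notMem_of_map_absolutelyContinuous (hXt _)
    (habs _ (add_pos_of_nonneg_of_pos zero_le (zero_le.trans_lt hST))) hE
  have hpath : ∀ᵐ ω ∂P, ∀ᶠ n in atTop,
      ((∃ s ∈ I ∩ grid n, X (Lam n t + s) ω ∈ B) ↔ ∃ s ∈ I, X (t + s) ω ∈ B) ∧
      ((∀ s ∈ I ∩ grid n, X (Lam n t + s) ω ∈ B) ↔ ∀ s ∈ I, X (t + s) ω ∈ B) := by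
    filter_upwards [hgood, hS, hT] with ω ⟨hcont, hlev, hmax, hmin⟩ hS hT
    exact eventually_grid_semantics_iff_of_intervals hI₁ hI₂ hST hxy hJ hdisj hcont hlev hmax
      hmin hS hT
  have hgrid : ∀ n, (I ∩ grid n).Countable := fun n => (countable_grid n).mono inter_subset_right
  have hD₁ : ∀ n, MeasurableSet {ω | ∃ s ∈ I ∩ grid n, X (Lam n t + s) ω ∈ B} := fun n => by
    convert MeasurableSet.biUnion (hgrid n) fun s _ => hXt (Lam n t + s) hB using 1; ext; simp
  have hD₂ : ∀ n, MeasurableSet {ω | ∀ s ∈ I ∩ grid n, X (Lam n t + s) ω ∈ B} := fun n => by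
    convert MeasurableSet.biInter (hgrid n) fun s _ => hXt (Lam n t + s) hB using 1; ext; simp
  obtain ⟨hC₁, hlim₁⟩ := measurableSet_and_tendsto_measure_of_ae_eventually_iff hD₁
    (hpath.mono fun ω h => h.mono fun n hn => hn.1)
  obtain ⟨hC₂, hlim₂⟩ := measurableSet_and_tendsto_measure_of_ae_eventually_iff hD₂
    (hpath.mono fun ω h => h.mono fun n hn => hn.2)
  exact ⟨hpath.mono fun ω h => eventually_atTop.mp h, hC₁, hC₂, hlim₁, hlim₂⟩
end
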